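/- arXiv:2203.02813 — 3 statements merged into one kernel-verified Lean document; each statement's English description precedes it below -/
import Mathlib

section
/- Let B be an n×n upper Hessenberg matrix (b_{ij} = 0 unless i ≤ j+1) over a (possibly noncommutative) ring, in which every subdiagonal entry b_{i+1,i} commutes with all entries of B. Define the left-to-right determinant det→(B) = Σ_{w ∈ S_n} sign(w) · b_{w(1),1} · b_{w(2),2} ⋯ b_{w(n),n}. Fix q ∈ {1,…,n−1} and set T = −b_{q+1,q}. Then det→(B) = T · det→(B'') + det→(B'), where B' is obtained from B by replacing b_{q+1,q} with 0, and B'' is the (n−1)×(n−1) matrix obtained from B by deleting row q+1 and column q. -/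
/-!
Split the sum defining `det→ B` according to whether `w` sends column `q` to row `q + 1`.
The permutations that do are exactly the extensions of the permutations of the remaining
`n - 1` indices by `q ↦ q + 1`; their sign picks up the transposition `(q q+1)`, and since
`b_{q+1,q}` is central it can be pulled out of each column-ordered product, leaving
`-b_{q+1,q} · det→ B''`. The other terms do not involve `b_{q+1,q}`, so they are the terms of
`det→ B'` that survive setting this entry to `0`.
-/

/-- The left-to-right (column-ordered) noncommutative determinant. -/
noncomputable def detLR {n : ℕ} {R : Type*} [Ring R] (B : Matrix (Fin n) (Fin n) R) : R :=
  ∑ w : Equiv.Perm (Fin n),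
    ((Equiv.Perm.sign w : ℤ) • (List.ofFn (fun i => B (w i) i)).prod)

open Equiv Finset

theorem List.prod_ofFn_eq_mul_prod_ofFn_succAbove {M : Type*} [Monoid M] {n : ℕ}
    (g : Fin (n + 1) → M) (a : Fin (n + 1)) (hg : ∀ i, Commute (g a) (g i)) :
    (List.ofFn g).prod = g a * (List.ofFn fun j => g (a.succAbove j)).prod := by
  induction n with
  | zero => obtain rfl := Fin.fin_one_eq_zero a; simp
  | succ n ih =>
    cases a using Fin.cases with
    | zero => simp [List.ofFn_succ]
    | succ a =>
      rw [List.ofFn_succ, List.prod_cons, ih (fun j => g j.succ) a (fun i => hg i.succ)]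
      simp only [List.ofFn_succ, List.prod_cons, Fin.succ_succAbove_zero,
        Fin.succ_succAbove_succ]
      rw [← mul_assoc, ← mul_assoc, (hg 0).eq]

namespace Equiv.Perm

variable {n : ℕ}

def succAboveCongr (a b : Fin (n + 1)) (σ : Perm (Fin n)) : Perm (Fin (n + 1)) :=
  ((finSuccEquiv' a).trans σ.optionCongr).trans (finSuccEquiv' b).symm

@[simp]
lemma succAboveCongr_apply_self (a b : Fin (n + 1)) (σ : Perm (Fin n)) :
    succAboveCongr a b σ a = b := by
  simp [succAboveCongr, finSuccEquiv'_at, finSuccEquiv'_symm_none]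

@[simp]
lemma succAboveCongr_apply_succAbove (a b : Fin (n + 1)) (σ : Perm (Fin n)) (j : Fin n) :
    succAboveCongr a b σ (a.succAbove j) = b.succAbove (σ j) := by
  simp [succAboveCongr, finSuccEquiv'_succAbove, finSuccEquiv'_symm_some]

def succAboveCongrEquiv (a b : Fin (n + 1)) :
    Perm (Fin n) ≃ {w : Perm (Fin (n + 1)) // w a = b} where
  toFun σ := ⟨succAboveCongr a b σ, succAboveCongr_apply_self a b σ⟩
  invFun w := removeNone (((finSuccEquiv' a).symm.trans w).trans (finSuccEquiv' b))
  left_inv σ := by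
    convert removeNone_optionCongr σ
    ext x
    simp [succAboveCongr]
  right_inv w := by
    obtain ⟨w, hw⟩ := w
    ext x
    simp [succAboveCongr, hw, finSuccEquiv'_at, finSuccEquiv'_symm_none]

lemma succAboveCongr_eq_permCongr_mul (a b : Fin (n + 1)) (σ : Perm (Fin n)) :
    succAboveCongr a b σ =
      (finSuccEquiv' b).symm.permCongr σ.optionCongr * succAboveCongr a b 1 := by
  ext x
  simp [succAboveCongr, Perm.mul_apply, permCongr_apply]

lemma sign_succAboveCongr (a b : Fin (n + 1)) (σ : Perm (Fin n)) :
    sign (succAboveCongr a b σ) = sign σ * sign (succAboveCongr a b 1) := by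
  rw [succAboveCongr_eq_permCongr_mul, map_mul, sign_permCongr, optionCongr_sign]

lemma succAboveCongr_castSucc_succ_one (q : Fin n) :
    succAboveCongr q.castSucc q.succ 1 = swap q.castSucc q.succ := by
  ext x
  obtain rfl | ⟨j, rfl⟩ := Fin.eq_self_or_eq_succAbove q.castSucc x
  · simp
  rcases lt_trichotomy j q with hjq | rfl | hqj
  · have hlt : j.castSucc < q.castSucc := Fin.castSucc_lt_castSucc_iff.2 hjq
    rw [succAboveCongr_apply_succAbove, one_apply, Fin.succAbove_succ_of_le _ _ hjq.le,
      Fin.succAbove_castSucc_of_lt _ _ hjq,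
      swap_apply_of_ne_of_ne hlt.ne (hlt.trans Fin.castSucc_lt_succ).ne]
  · rw [succAboveCongr_apply_succAbove]
    simp
  · have hlt : q.succ < j.succ := Fin.succ_lt_succ_iff.2 hqj
    rw [succAboveCongr_apply_succAbove, one_apply, Fin.succAbove_succ_of_lt _ _ hqj,
      Fin.succAbove_castSucc_of_le _ _ hqj.le,
      swap_apply_of_ne_of_ne (Fin.castSucc_lt_succ.trans hlt).ne' hlt.ne']

end Equiv.Perm

open Equiv.Perm

section detLR

variable {R : Type*} [Ring R] {n : ℕ}

def detLRTerm (B : Matrix (Fin n) (Fin n) R) (w : Perm (Fin n)) : R :=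
  (sign w : ℤ) • (List.ofFn fun i => B (w i) i).prod

lemma detLR_eq_sum_detLRTerm (B : Matrix (Fin n) (Fin n) R) :
    detLR B = ∑ w, detLRTerm B w :=
  rfl

lemma sum_detLRTerm_apply_ne (B : Matrix (Fin n) (Fin n) R) (a b : Fin n) :
    ∑ w ∈ univ.filter (fun w : Perm (Fin n) => w a ≠ b), detLRTerm B w =
      detLR (Matrix.of fun i j => if i = b ∧ j = a then 0 else B i j) := by
  set B' : Matrix (Fin n) (Fin n) R := Matrix.of fun i j => if i = b ∧ j = a then 0 else B i j
  have hvanish : ∀ w ∈ univ.filter (fun w : Perm (Fin n) => ¬ w a ≠ b),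
      detLRTerm B' w = 0 := by
    intro w hw
    rw [detLRTerm, List.prod_eq_zero, smul_zero]
    exact List.mem_ofFn.2 ⟨a, by simp_all [B']⟩
  have hagree : ∀ w ∈ univ.filter (fun w : Perm (Fin n) => w a ≠ b),
      detLRTerm B w = detLRTerm B' w := by
    intro w hw
    have hentries : (fun i => B (w i) i) = fun i => B' (w i) i := by
      ext i
      by_cases hi : i = a <;> simp_all [B']
    rw [detLRTerm, detLRTerm, hentries]
  rw [detLR_eq_sum_detLRTerm, ← sum_filter_add_sum_filter_not univ (fun w => w a ≠ b),
    sum_eq_zero hvanish, add_zero]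
  exact sum_congr rfl hagree

lemma detLRTerm_succAboveCongr (B : Matrix (Fin (n + 1)) (Fin (n + 1)) R) (a b : Fin (n + 1))
    (hcomm : ∀ k l, Commute (B b a) (B k l)) (σ : Perm (Fin n)) :
    detLRTerm B (succAboveCongr a b σ) = (sign (succAboveCongr a b 1) : ℤ) •
      (B b a * detLRTerm (B.submatrix b.succAbove a.succAbove) σ) := by
  rw [detLRTerm, detLRTerm, sign_succAboveCongr,
    List.prod_ofFn_eq_mul_prod_ofFn_succAbove _ a fun i => by simpa using hcomm _ i]
  simp only [succAboveCongr_apply_self, succAboveCongr_apply_succAbove, Matrix.submatrix_apply]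
  push_cast
  rw [mul_smul_comm, smul_smul, mul_comm]

lemma sum_detLRTerm_apply_eq (B : Matrix (Fin (n + 1)) (Fin (n + 1)) R) (a b : Fin (n + 1))
    (hcomm : ∀ k l, Commute (B b a) (B k l)) :
    ∑ w ∈ univ.filter (fun w : Perm (Fin (n + 1)) => w a = b), detLRTerm B w =
      (sign (succAboveCongr a b 1) : ℤ) •
        (B b a * detLR (B.submatrix b.succAbove a.succAbove)) := by
  rw [sum_subtype (p := fun w => w a = b) _ (fun w => by simp),
    ← (succAboveCongrEquiv a b).sum_comp, detLR_eq_sum_detLRTerm, mul_sum, smul_sum]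
  exact sum_congr rfl fun σ _ => detLRTerm_succAboveCongr B a b hcomm σ

end detLR

theorem stmt0_general {R : Type*} [Ring R] {n : ℕ} (B : Matrix (Fin (n + 1)) (Fin (n + 1)) R)
    (hcomm : ∀ i : Fin n, ∀ k l : Fin (n + 1),
      Commute (B i.succ i.castSucc) (B k l))
    (q : Fin n) :
    detLR B =
      (-(B q.succ q.castSucc)) *
          detLR (B.submatrix q.succ.succAbove q.castSucc.succAbove) +
        detLR (Matrix.of fun i j =>
          if i = q.succ ∧ j = q.castSucc then 0 else B i j) := by
  rw [detLR_eq_sum_detLRTerm, ← sum_filter_add_sum_filter_not univ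
      (fun w : Perm (Fin (n + 1)) => w q.castSucc = q.succ),
    sum_detLRTerm_apply_eq B _ _ (hcomm q), sum_detLRTerm_apply_ne,
    succAboveCongr_castSucc_succ_one, sign_swap Fin.castSucc_lt_succ.ne, Units.val_neg,
    Units.val_one, neg_one_smul, neg_mul]

/-- Cofactor-type expansion of the left-to-right determinant of an upper Hessenberg matrix
at the subdiagonal entry `b_{q+1,q}`. -/
theorem stmt0 {R : Type*} [Ring R] {n : ℕ} (B : Matrix (Fin (n + 1)) (Fin (n + 1)) R)
    (hHess : ∀ i j : Fin (n + 1), (j : ℕ) + 1 < (i : ℕ) → B i j = 0)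
    (hcomm : ∀ i : Fin n, ∀ k l : Fin (n + 1),
      Commute (B i.succ i.castSucc) (B k l))
    (q : Fin n) :
    detLR B =
      (-(B q.succ q.castSucc)) *
          detLR (B.submatrix q.succ.succAbove q.castSucc.succAbove) +
        detLR (Matrix.of fun i j =>
          if i = q.succ ∧ j = q.castSucc then 0 else B i j) :=
  stmt0_general B hcomm q
end

section
/- Let g = gl(m,ℂ), η = ε_1 − ε_m the highest root, and λ ∈ h* with (λ + ρ, η) = 1. Let I = {subsets J of {1,…,m} containing both 1 and m}. For J = {i_0 > i_1 > ⋯ > i_{s+1}} ∈ I, set f_J = e_{i_0,i_1} e_{i_1,i_2} ⋯ e_{i_s,i_{s+1}} ∈ U(n^−), set r(J) = {s − 1 : s ∈ complement of J in {1,…,m}}, and H_J = ∏_{i ∈ r(J)} ((λ+ρ, ε_1 − ε_{i+1}) − 1). Then in the Verma module M(λ) the vector Θ v_λ = Σ_{J ∈ I} f_J H_J v_λ is a highest weight vector of weight λ − η, i.e. e_{α_k} Θ v_λ = 0 for all k ∈ [m−1]. -/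
attribute [local instance 100] LieRing.ofAssociativeRing

/-- For a strictly descending list `[i₀, i₁, …, i_{s+1}]` of indices, the action on a module
element of the product `f_I = e_{i₀,i₁} e_{i₁,i₂} ⋯ e_{i_s,i_{s+1}} ∈ U(n⁻)` of negative root
vectors of `gl(m)` (the leftmost factor acting last). -/
def act {m : ℕ} {M : Type*} [AddCommGroup M]
    [LieRingModule (Matrix (Fin m) (Fin m) ℂ) M] :
    List (Fin m) → M → M
  | [], x => x
  | [_], x => x
  | i :: j :: t, x => ⁅Matrix.single i j (1 : ℂ), act (j :: t) x⁆

/-!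
Indices are 0-based. Fix `E = e_{a,b}` with `b = a + 1` and group the subsets `J` by
`S = J \ {a, b}`; let `U`, `V` be the parts of `S` above `b` and below `a`, and `εᵤ`, `εᵥ ∈ {0, 1}`
record whether they are nonempty. Then `[E, f_J] v` vanishes for `J = S`, and for
`J = S ∪ {a}`, `S ∪ {b}`, `S ∪ {a, b}` it is `-εᵤ`, `εᵥ`, `λ_a - λ_b + εᵥ` times the single vector
`f_{U, b} f_{a, V} v`. With `c_s = λ_0 - λ_s + s - 1` one has `H_{S ∪ {b}} = c_a H` and
`H_{S ∪ {a}} = c_b H` for `H = H_{S ∪ {a, b}}`, so in the generic case the group contributes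
`H (λ_a - λ_b + 1 + c_a - c_b) = H (1 + a - b) = 0`. At the ends (`a = 0` or `b = m - 1`) the
sets that miss `0` or `m - 1` drop out exactly when the corresponding `ε` vanishes, and the
remaining coefficient is killed by the value of `c_1` or by `(λ + ρ, η) = 1`.
-/

namespace Shapovalov

local notation "E[" i "," j "]" => Matrix.single i j (1 : ℂ)

lemma lie_single_single {m : ℕ} (i j k l : Fin m) :
    ⁅E[i,j], E[k,l]⁆ = (if j = k then E[i,l] else 0) - (if l = i then E[k,j] else 0) := by
  rw [Ring.lie_def]
  by_cases h1 : j = k <;> by_cases h2 : l = i <;>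
    simp [h1, h2, Matrix.single_mul_single_same, Matrix.single_mul_single_of_ne]

section act

variable {m : ℕ} {M : Type*} [AddCommGroup M] [LieRingModule (Matrix (Fin m) (Fin m) ℂ) M]

lemma act_cons (i j : Fin m) (t : List (Fin m)) (x : M) :
    act (i :: j :: t) x = ⁅E[i,j], act (j :: t) x⁆ := rfl

lemma act_append : ∀ (U : List (Fin m)) (h : Fin m) (R : List (Fin m)) (x : M),
    act (U ++ h :: R) x = act (U ++ [h]) (act (h :: R) x)
  | [], _, _, _ => rfl
  | [_], _, _, _ => rfl
  | u :: u' :: U, h, R, x => by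
    simp only [List.cons_append, act_cons]
    rw [← List.cons_append, act_append (u' :: U) h R x, List.cons_append]

/-- `L.dropLast` and `L.tail` are the row and column indices of the factors `E_ij` of `f_L`, and
`[E_ab, E_ij] = 0` unless `i = b` or `j = a`. -/
lemma lie_act_of_not_mem {a b : Fin m} : ∀ (L : List (Fin m)) (x : M),
    b ∉ L.dropLast → a ∉ L.tail → ⁅E[a,b], act L x⁆ = act L ⁅E[a,b], x⁆
  | [], _, _, _ => rfl
  | [_], _, _, _ => rfl
  | i :: j :: t, x, hb, ha => by
    have hbi : b ≠ i := fun h => hb (by simp [h])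
    have hja : j ≠ a := fun h => ha (by simp [h])
    rw [act_cons, act_cons, leibniz_lie, lie_single_single, if_neg hbi, if_neg hja, sub_zero,
      zero_lie, zero_add, lie_act_of_not_mem (j :: t) x
        (fun h => hb (List.mem_cons_of_mem _ h)) (fun h => ha (List.mem_cons_of_mem _ h))]

lemma lie_act_append_cons {a b h : Fin m} {U : List (Fin m)} (hab : a < b)
    (hU : ∀ u ∈ U, b < u) (hh : h ≠ a) (R : List (Fin m)) (x : M) :
    ⁅E[a,b], act (U ++ h :: R) x⁆ = act (U ++ [h]) ⁅E[a,b], act (h :: R) x⁆ := by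
  rw [act_append, lie_act_of_not_mem]
  · rw [List.dropLast_concat]
    exact fun hb => lt_irrefl b (hU b hb)
  · intro ha
    rcases List.mem_append.1 (List.mem_of_mem_tail ha) with ha | ha
    · exact lt_asymm hab (hU a ha)
    · exact hh (List.mem_singleton.1 ha).symm

variable [Module ℂ M] [LieModule ℂ (Matrix (Fin m) (Fin m) ℂ) M]

lemma act_smul : ∀ (L : List (Fin m)) (c : ℂ) (x : M), act L (c • x) = c • act L x
  | [], _, _ => rfl
  | [_], _, _ => rfl
  | i :: j :: t, c, x => by rw [act_cons, act_cons, act_smul (j :: t), lie_smul]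

lemma act_zero (L : List (Fin m)) : act L (0 : M) = 0 := by
  simpa using act_smul L 0 (0 : M)

lemma act_neg (L : List (Fin m)) (x : M) : act L (-x) = -act L x := by
  simpa using act_smul L (-1) x

lemma lie_act_eq_zero {a b : Fin m} {x : M} (hx : ⁅E[a,b], x⁆ = 0) {L : List (Fin m)}
    (hb : b ∉ L.dropLast) (ha : a ∉ L.tail) : ⁅E[a,b], act L x⁆ = 0 := by
  rw [lie_act_of_not_mem L x hb ha, hx, act_zero]

variable {v : M} {lam : Fin m → ℂ}

lemma lie_diag_act (hwt : ∀ i : Fin m, ⁅E[i,i], v⁆ = lam i • v) {c : Fin m} {L : List (Fin m)}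
    (hc : c ∉ L) : ⁅E[c,c], act L v⁆ = lam c • act L v := by
  rw [lie_act_of_not_mem L v (fun h => hc (List.mem_of_mem_dropLast h))
    (fun h => hc (List.mem_of_mem_tail h)), hwt, act_smul]

lemma lie_diag_act_cons (hwt : ∀ i : Fin m, ⁅E[i,i], v⁆ = lam i • v) {c : Fin m}
    {V : List (Fin m)} (hc : c ∉ V) :
    ⁅E[c,c], act (c :: V) v⁆ = (lam c + if V = [] then 0 else 1) • act (c :: V) v := by
  cases V with
  | nil => rw [if_pos rfl, add_zero]; exact hwt c
  | cons j t =>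
    have hjc : j ≠ c := fun h => hc (by simp [h])
    rw [act_cons, leibniz_lie, lie_single_single, if_pos rfl, if_neg hjc, sub_zero,
      lie_diag_act hwt hc, lie_smul, if_neg (List.cons_ne_nil j t)]
    module

section raising

variable {a b : Fin m} {U V : List (Fin m)}

lemma lie_act_cons_eq_zero (hw0 : ⁅E[a,b], v⁆ = 0) (hab : a < b) (hV : ∀ x ∈ V, x < a) :
    ⁅E[a,b], act (a :: V) v⁆ = 0 :=
  lie_act_eq_zero hw0
    (fun hb => by
      rcases List.mem_cons.1 (List.mem_of_mem_dropLast hb) with hb | hb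
      · exact hab.ne' hb
      · exact lt_asymm hab (hV b hb))
    (fun ha => lt_irrefl a (hV a ha))

lemma lie_act_cons_cons (hw0 : ⁅E[a,b], v⁆ = 0) (hab : a < b)
    (hwt : ∀ i : Fin m, ⁅E[i,i], v⁆ = lam i • v) (hV : ∀ x ∈ V, x < a) :
    ⁅E[a,b], act (b :: a :: V) v⁆ =
      (lam a - lam b + if V = [] then 0 else 1) • act (a :: V) v := by
  have hbaV : b ∉ a :: V := by
    rintro (_ | ⟨_, hb⟩)
    · exact lt_irrefl a hab
    · exact lt_asymm hab (hV b hb)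
  rw [act_cons, leibniz_lie, lie_single_single, if_pos rfl, if_pos rfl,
    lie_act_cons_eq_zero hw0 hab hV, lie_zero, add_zero, sub_lie,
    lie_diag_act_cons hwt (fun ha => lt_irrefl a (hV a ha)), lie_diag_act hwt hbaV]
  module

lemma lie_act_cons (hw0 : ⁅E[a,b], v⁆ = 0) (hab : a < b) (hV : ∀ x ∈ V, x < a) :
    ⁅E[a,b], act (b :: V) v⁆ = (if V = [] then (0 : ℂ) else 1) • act (a :: V) v := by
  cases V with
  | nil => rw [if_pos rfl, zero_smul]; exact hw0
  | cons j t =>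
    have hja : j ≠ a := (hV j (List.mem_cons_self ..)).ne
    have hkill : ⁅E[a,b], act (j :: t) v⁆ = 0 :=
      lie_act_eq_zero hw0
        (fun hb => lt_asymm hab (hV b (List.mem_of_mem_dropLast hb)))
        (fun ha => lt_irrefl a (hV a (List.mem_of_mem_tail ha)))
    rw [act_cons, leibniz_lie, lie_single_single, if_pos rfl, if_neg hja, sub_zero, hkill,
      lie_zero, add_zero, if_neg (List.cons_ne_nil j t), one_smul, ← act_cons]

lemma lie_act_append_eq_zero (hw0 : ⁅E[a,b], v⁆ = 0) (hab : a < b)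
    (hU : ∀ u ∈ U, b < u) (hV : ∀ x ∈ V, x < a) : ⁅E[a,b], act (U ++ V) v⁆ = 0 := by
  have hab' : ∀ x ∈ U ++ V, x ≠ a ∧ x ≠ b := by
    intro x hx
    rcases List.mem_append.1 hx with hx | hx
    · exact ⟨(hab.trans (hU x hx)).ne', (hU x hx).ne'⟩
    · exact ⟨(hV x hx).ne, ((hV x hx).trans hab).ne⟩
  exact lie_act_eq_zero hw0 (fun hb => (hab' b (List.mem_of_mem_dropLast hb)).2 rfl)
    (fun ha => (hab' a (List.mem_of_mem_tail ha)).1 rfl)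

lemma lie_act_append_cons_cons (hw0 : ⁅E[a,b], v⁆ = 0) (hab : a < b)
    (hU : ∀ u ∈ U, b < u) (hV : ∀ x ∈ V, x < a)
    (hwt : ∀ i : Fin m, ⁅E[i,i], v⁆ = lam i • v) :
    ⁅E[a,b], act (U ++ b :: a :: V) v⁆ =
      (lam a - lam b + if V = [] then 0 else 1) • act (U ++ [b]) (act (a :: V) v) := by
  rw [lie_act_append_cons hab hU hab.ne', lie_act_cons_cons hw0 hab hwt hV, act_smul]

lemma lie_act_append_upper_cons (hw0 : ⁅E[a,b], v⁆ = 0) (hab : a < b)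
    (hU : ∀ u ∈ U, b < u) (hV : ∀ x ∈ V, x < a) :
    ⁅E[a,b], act (U ++ b :: V) v⁆ =
      (if V = [] then (0 : ℂ) else 1) • act (U ++ [b]) (act (a :: V) v) := by
  rw [lie_act_append_cons hab hU hab.ne', lie_act_cons hw0 hab hV, act_smul]

lemma lie_act_append_lower_cons (hw0 : ⁅E[a,b], v⁆ = 0) (hab : a < b)
    (hU : ∀ u ∈ U, b < u) (hV : ∀ x ∈ V, x < a) :
    ⁅E[a,b], act (U ++ a :: V) v⁆ =
      (if U = [] then (0 : ℂ) else -1) • act (U ++ [b]) (act (a :: V) v) := by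
  rcases List.eq_nil_or_concat' U with rfl | ⟨U, u, rfl⟩
  · rw [if_pos rfl, zero_smul]
    exact lie_act_cons_eq_zero hw0 hab hV
  · have hU' : ∀ x ∈ U, b < x := fun x hx => hU x (List.mem_append_left _ hx)
    have hu : b < u := hU u (by simp)
    have hsplit : ⁅E[a,b], ⁅E[u,a], act (a :: V) v⁆⁆ = -⁅E[u,b], act (a :: V) v⁆ := by
      rw [leibniz_lie, lie_single_single, if_neg hu.ne, if_pos rfl,
        lie_act_cons_eq_zero hw0 hab hV, lie_zero, add_zero, zero_sub, neg_lie]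
    rw [List.append_assoc, List.singleton_append, lie_act_append_cons hab hU' (hab.trans hu).ne',
      act_cons, hsplit, act_neg, if_neg (by simp), neg_one_smul, List.append_assoc,
      List.singleton_append, act_append U u [b]]
    rfl

end raising

end act

section descSort

variable {α : Type*} [LinearOrder α]

def descSort (J : Finset α) : List α := (J.sort (· ≤ ·)).reverse

lemma descSort_eq_of_mem_iff {J : Finset α} {L : List α} (hL : L.SortedGT)
    (h : ∀ x, x ∈ L ↔ x ∈ J) : descSort J = L :=
  J.sortedLT_sort.reverse.eq_of_mem_iff hL fun x => by simp [h]

lemma mem_descSort {J : Finset α} {x : α} : x ∈ descSort J ↔ x ∈ J := by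
  simp [descSort]

lemma descSort_eq_nil_iff {J : Finset α} : descSort J = [] ↔ J = ∅ := by
  rw [descSort, List.reverse_eq_nil_iff, ← List.length_eq_zero_iff, Finset.length_sort,
    Finset.card_eq_zero]

lemma filter_lt_eq_empty_iff_of_isBot {S : Finset α} {a z : α} (hz : IsBot z)
    (hzS : z ∈ S ∨ z = a) : S.filter (· < a) = ∅ ↔ z = a := by
  refine ⟨fun h => by_contra fun hza => ?_, fun h => ?_⟩
  · have hz' : z ∈ S.filter (· < a) :=
      Finset.mem_filter.2 ⟨hzS.resolve_right hza, lt_of_le_of_ne (hz a) hza⟩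
    simp [h] at hz'
  · exact Finset.filter_eq_empty_iff.2 fun x _ => h ▸ not_lt_of_ge (hz x)

lemma filter_gt_eq_empty_iff_of_isTop {S : Finset α} {b w : α} (hw : IsTop w)
    (hwS : w ∈ S ∨ w = b) : S.filter (b < ·) = ∅ ↔ w = b := by
  refine ⟨fun h => by_contra fun hwb => ?_, fun h => ?_⟩
  · have hw' : w ∈ S.filter (b < ·) :=
      Finset.mem_filter.2 ⟨hwS.resolve_right hwb, lt_of_le_of_ne (hw b) (Ne.symm hwb)⟩
    simp [h] at hw'
  · exact Finset.filter_eq_empty_iff.2 fun x _ => h ▸ not_lt_of_ge (hw x)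

lemma descSort_eq_append {a b : α} (hab : a ≤ b) {S J : Finset α} (hS : ∀ s ∈ S, s < a ∨ b < s)
    {T : List α} (hT : T.Pairwise (· > ·)) (hTab : ∀ t ∈ T, a ≤ t ∧ t ≤ b)
    (hJ : ∀ x, x ∈ J ↔ x ∈ S ∨ x ∈ T) :
    descSort J = descSort (S.filter (b < ·)) ++ (T ++ descSort (S.filter (· < a))) := by
  apply descSort_eq_of_mem_iff
  · simp only [descSort, List.sortedGT_iff_pairwise, List.pairwise_append, List.pairwise_reverse,
      List.mem_append, List.mem_reverse, Finset.mem_sort, Finset.mem_filter]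
    refine ⟨(Finset.sortedLT_sort _).pairwise, ⟨hT, (Finset.sortedLT_sort _).pairwise, ?_⟩, ?_⟩
    · exact fun t ht s hs => lt_of_lt_of_le hs.2 (hTab t ht).1
    · rintro u ⟨-, hu⟩ x (hx | ⟨-, hx⟩)
      · exact lt_of_le_of_lt (hTab x hx).2 hu
      · exact (hx.trans_le hab).trans hu
  · intro x
    simp only [List.mem_append, mem_descSort, Finset.mem_filter, hJ]
    constructor
    · rintro (⟨hx, -⟩ | hx | ⟨hx, -⟩) <;> tauto
    · rintro (hx | hx)
      · rcases hS x hx with h | h <;> tauto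
      · tauto

variable {a b : α} (hab : a < b) {S : Finset α} (hS : ∀ s ∈ S, s < a ∨ b < s)
include hab hS

lemma descSort_eq_split :
    descSort S = descSort (S.filter (b < ·)) ++ descSort (S.filter (· < a)) :=
  descSort_eq_append hab.le hS (T := []) (by simp) (by simp) (by simp)

lemma descSort_insert_lower_eq_split :
    descSort (insert a S) = descSort (S.filter (b < ·)) ++ a :: descSort (S.filter (· < a)) :=
  descSort_eq_append hab.le hS (T := [a]) (by simp) (by simp [hab.le]) (by simp [or_comm])

lemma descSort_insert_upper_eq_split :
    descSort (insert b S) = descSort (S.filter (b < ·)) ++ b :: descSort (S.filter (· < a)) :=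
  descSort_eq_append hab.le hS (T := [b]) (by simp) (by simp [hab.le]) (by simp [or_comm])

lemma descSort_insert_insert_eq_split :
    descSort (insert b (insert a S)) =
      descSort (S.filter (b < ·)) ++ b :: a :: descSort (S.filter (· < a)) :=
  descSort_eq_append hab.le hS (T := [b, a]) (by simp [hab]) (by simp [hab.le])
    (by simp; tauto)

end descSort

lemma sum_univ_eq_sum_powerset_insert_insert {α β : Type*} [Fintype α] [DecidableEq α]
    [AddCommMonoid β] {a b : α} (hab : a ≠ b) (f : Finset α → β) :
    ∑ J, f J = ∑ S ∈ ((Finset.univ.erase b).erase a).powerset,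
      (f S + f (insert a S) + f (insert b S) + f (insert b (insert a S))) := by
  set R := (Finset.univ.erase b).erase a
  have hR : Finset.univ = insert b (insert a R) := by
    rw [Finset.insert_erase (Finset.mem_erase.2 ⟨hab, Finset.mem_univ a⟩),
      Finset.insert_erase (Finset.mem_univ b)]
  rw [← Finset.powerset_univ, hR, Finset.sum_powerset_insert (by simp [R, hab.symm]),
    Finset.sum_powerset_insert (by simp [R]), Finset.sum_powerset_insert (by simp [R]),
    ← Finset.sum_add_distrib, ← Finset.sum_add_distrib, ← Finset.sum_add_distrib]
  exact Finset.sum_congr rfl fun S _ => by abel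

lemma coeff_sum_eq_zero {m : ℕ} {lam : Fin m → ℂ} {z w a b : Fin m} (hz : (z : ℕ) = 0)
    (hw : (w : ℕ) = m - 1) (hlam : lam z - lam w + ((m : ℂ) - 1) = 1)
    (hab : (a : ℕ) + 1 = b) {p q : Prop} [Decidable p] [Decidable q]
    (hp : p → (a : ℕ) = 0) (hq : q → (b : ℕ) = m - 1) :
    (lam a - lam b + if p then 0 else 1) +
      (lam z - lam a + ((a : ℕ) : ℂ) - 1) * (if p then 0 else 1) -
      (lam z - lam b + ((b : ℕ) : ℂ) - 1) * (if q then 0 else 1) = 0 := by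
  have hcast : ((b : ℕ) : ℂ) = (a : ℕ) + 1 := by exact_mod_cast hab.symm
  have hza : p → lam z = lam a := fun h => congrArg lam (Fin.ext (by have := hp h; omega))
  have hbm : q → m = (b : ℕ) + 1 := fun h => by have := hq h; have := b.isLt; omega
  have hwb : q → lam w = lam b := fun h => congrArg lam (Fin.ext (by have := hbm h; omega))
  have hm : q → (m : ℂ) = (b : ℕ) + 1 := fun h => by exact_mod_cast hbm h
  split_ifs with h₁ h₂ h₂
  · have ha0 : ((a : ℕ) : ℂ) = 0 := by exact_mod_cast hp h₁
    linear_combination -hza h₁ + hlam + hwb h₂ - hm h₂ - hcast - ha0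
  · have ha0 : ((a : ℕ) : ℂ) = 0 := by exact_mod_cast hp h₁
    linear_combination -hza h₁ - hcast - ha0
  · linear_combination hlam + hwb h₂ - hm h₂ - hcast
  · linear_combination -hcast

lemma prod_univ_sdiff_eq_mul {α β : Type*} [Fintype α] [DecidableEq α] [CommMonoid β]
    (f : α → β) {T : Finset α} {x : α} (hx : x ∉ T) :
    ∏ s ∈ Finset.univ \ T, f s = f x * ∏ s ∈ Finset.univ \ insert x T, f s := by
  rw [Finset.sdiff_insert, Finset.mul_prod_erase _ _ (by simp [hx])]

section fiber

variable {m : ℕ} {M : Type*} [AddCommGroup M] [Module ℂ M]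
  [LieRingModule (Matrix (Fin m) (Fin m) ℂ) M] [LieModule ℂ (Matrix (Fin m) (Fin m) ℂ) M]
  {v : M} {lam : Fin m → ℂ} {z w a b : Fin m}

lemma fiber_sum_eq_zero_of_mem (hw0 : ⁅E[a,b], v⁆ = 0)
    (hwt : ∀ i : Fin m, ⁅E[i,i], v⁆ = lam i • v) (hz : (z : ℕ) = 0) (hwm : (w : ℕ) = m - 1)
    (hlam : lam z - lam w + ((m : ℂ) - 1) = 1) (hab : (a : ℕ) + 1 = b)
    {S : Finset (Fin m)} (haS : a ∉ S) (hbS : b ∉ S)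
    (hzS : z ∈ S ∨ z = a) (hwS : w ∈ S ∨ w = b) (f : Finset (Fin m) → M)
    (hf : ∀ J, f J = if z ∈ J ∧ w ∈ J then
      ⁅E[a,b], (∏ s ∈ Finset.univ \ J, (lam z - lam s + ((s : ℕ) : ℂ) - 1)) •
        act (descSort J) v⁆ else 0) :
    f S + f (insert a S) + f (insert b S) + f (insert b (insert a S)) = 0 := by
  have hlt : a < b := by omega
  have hS : ∀ s ∈ S, s < a ∨ b < s := fun s hs => by
    have := ne_of_mem_of_not_mem hs haS
    have := ne_of_mem_of_not_mem hs hbS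
    omega
  set U := descSort (S.filter (b < ·))
  set V := descSort (S.filter (· < a))
  have hU : ∀ u ∈ U, b < u := fun u hu => (Finset.mem_filter.1 (mem_descSort.1 hu)).2
  have hV : ∀ x ∈ V, x < a := fun x hx => (Finset.mem_filter.1 (mem_descSort.1 hx)).2
  have hVnil : V = [] ↔ z = a := descSort_eq_nil_iff.trans
    (filter_lt_eq_empty_iff_of_isBot (fun x => Fin.le_def.2 (by omega)) hzS)
  have hUnil : U = [] ↔ w = b := descSort_eq_nil_iff.trans
    (filter_gt_eq_empty_iff_of_isTop (fun x => Fin.le_def.2 (by omega)) hwS)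
  set X := act (U ++ [b]) (act (a :: V) v)
  set P := ∏ s ∈ Finset.univ \ insert b (insert a S), (lam z - lam s + ((s : ℕ) : ℂ) - 1)
  have h0 : f S = 0 := by
    rw [hf, lie_smul, descSort_eq_split hlt hS,
      lie_act_append_eq_zero hw0 hlt hU hV, smul_zero, ite_self]
  have h1 : f (insert b (insert a S)) = (P * (lam a - lam b + if V = [] then 0 else 1)) • X := by
    rw [hf, if_pos ⟨by grind, by grind⟩, lie_smul, descSort_insert_insert_eq_split hlt hS,
      lie_act_append_cons_cons hw0 hlt hU hV hwt, smul_smul]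
  have h2 : f (insert b S) =
      ((lam z - lam a + ((a : ℕ) : ℂ) - 1) * P * if V = [] then 0 else 1) • X := by
    rw [hf, lie_smul, descSort_insert_upper_eq_split hlt hS,
      lie_act_append_upper_cons hw0 hlt hU hV,
      prod_univ_sdiff_eq_mul _ (x := a) (by simp [haS, hlt.ne]), Finset.insert_comm a b S]
    by_cases hVn : V = []
    · simp [hVn]
    · rw [if_pos ⟨by grind, by grind⟩, if_neg hVn, smul_smul, mul_one]
  have h3 : f (insert a S) =
      (-(lam z - lam b + ((b : ℕ) : ℂ) - 1) * P * if U = [] then 0 else 1) • X := by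
    rw [hf, lie_smul, descSort_insert_lower_eq_split hlt hS,
      lie_act_append_lower_cons hw0 hlt hU hV,
      prod_univ_sdiff_eq_mul _ (x := b) (by simp [hbS, hlt.ne'])]
    by_cases hUn : U = []
    · simp [hUn]
    · rw [if_pos ⟨by grind, by grind⟩, if_neg hUn, if_neg hUn, smul_smul]
      module
  have key := coeff_sum_eq_zero hz hwm hlam hab (p := V = []) (q := U = [])
    (fun h => by rw [← hVnil.1 h, hz]) (fun h => by rw [← hUnil.1 h, hwm])
  rw [h0, h1, h2, h3]
  linear_combination (norm := module) (P * key) • X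

lemma fiber_sum_eq_zero (hw0 : ⁅E[a,b], v⁆ = 0)
    (hwt : ∀ i : Fin m, ⁅E[i,i], v⁆ = lam i • v) (hz : (z : ℕ) = 0) (hwm : (w : ℕ) = m - 1)
    (hlam : lam z - lam w + ((m : ℂ) - 1) = 1) (hab : (a : ℕ) + 1 = b)
    {S : Finset (Fin m)} (haS : a ∉ S) (hbS : b ∉ S) (f : Finset (Fin m) → M)
    (hf : ∀ J, f J = if z ∈ J ∧ w ∈ J then
      ⁅E[a,b], (∏ s ∈ Finset.univ \ J, (lam z - lam s + ((s : ℕ) : ℂ) - 1)) •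
        act (descSort J) v⁆ else 0) :
    f S + f (insert a S) + f (insert b S) + f (insert b (insert a S)) = 0 := by
  by_cases hidx : z ∈ insert b (insert a S) ∧ w ∈ insert b (insert a S)
  · refine fiber_sum_eq_zero_of_mem hw0 hwt hz hwm hlam hab haS hbS ?_ ?_ f hf
    · simpa [show z ≠ b from fun h => by omega, or_comm] using hidx.1
    · simpa [show w ≠ a from fun h => by omega, or_comm] using hidx.2
  · have hnot : ∀ J ⊆ insert b (insert a S), f J = 0 := fun J hJ => by
      rw [hf, if_neg fun h => hidx ⟨hJ h.1, hJ h.2⟩]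
    rw [hnot _ (by grind), hnot _ (by grind), hnot _ (by grind), hnot _ subset_rfl]
    simp

end fiber

end Shapovalov

open Shapovalov in
/-- Šapovalov element of `gl(m)` for the highest root `η = ε_1 − ε_m` (Theorem `bb`):
if `v` is a highest weight vector of weight `λ` with `(λ + ρ, η) = 1`, i.e.
`λ_1 − λ_m + (m − 1) = 1`, then `Θ v = Σ_{J ∈ 𝓘} H_J(λ) · f_J v` is a highest weight vector,
where `𝓘` is the set of subsets of `{1,…,m}` containing `1` and `m`,
`f_J` is the descending product of root vectors along `J`, and
`H_J(λ) = ∏_{s ∉ J} ((λ+ρ, ε_1 − ε_{s}) − 1)` (0-based: factor `λ_0 − λ_s + s − 1`). -/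
theorem stmt6 {m : ℕ} (hm : 2 ≤ m) {M : Type*} [AddCommGroup M] [Module ℂ M]
    [LieRingModule (Matrix (Fin m) (Fin m) ℂ) M]
    [LieModule ℂ (Matrix (Fin m) (Fin m) ℂ) M]
    (v : M) (lam : Fin m → ℂ)
    (hw : ∀ i j : Fin m, i < j → ⁅Matrix.single i j (1 : ℂ), v⁆ = 0)
    (hwt : ∀ i : Fin m, ⁅Matrix.single i i (1 : ℂ), v⁆ = lam i • v)
    (hlam : lam ⟨0, by omega⟩ - lam ⟨m - 1, by omega⟩ + ((m : ℂ) - 1) = 1)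
    (Θv : M)
    (hΘ : Θv = ∑ J ∈ Finset.univ.filter
        (fun J : Finset (Fin m) => (⟨0, by omega⟩ : Fin m) ∈ J ∧ (⟨m - 1, by omega⟩ : Fin m) ∈ J),
      (∏ s ∈ Finset.univ \ J,
          (lam ⟨0, by omega⟩ - lam s + ((s : ℕ) : ℂ) - 1)) •
        act ((J.sort (· ≤ ·)).reverse) v) :
    ∀ k : ℕ, 1 ≤ k → ∀ hk : k ≤ m - 1,
      ⁅Matrix.single (⟨k - 1, by omega⟩ : Fin m) (⟨k, by omega⟩ : Fin m) (1 : ℂ),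
        Θv⁆ = 0 := by
  intro k hk1 hk
  have hlt : (⟨k - 1, by omega⟩ : Fin m) < ⟨k, by omega⟩ := Fin.mk_lt_mk.2 (by omega)
  rw [hΘ, lie_sum, Finset.sum_filter, sum_univ_eq_sum_powerset_insert_insert hlt.ne]
  refine Finset.sum_eq_zero fun S hS => ?_
  rw [Finset.mem_powerset] at hS
  exact fiber_sum_eq_zero (hw _ _ hlt) hwt rfl rfl hlam
    (by simp; omega) (fun h => by simpa using hS h)
    (fun h => by simpa using hS h) _ fun J => rfl
end

section
/- With the setup of the previous statement (shuffle σ with σ(1)=1, σ(n′)=n′, quantities i(k), ℓ(k), ī(k), d_k), one has d_{m+n−1} = −(ρ, η) = r − s, where η = ε_1 − δ_n, r is the total number of simple roots belonging to 0⊕gl(n), and s is the total number belonging to gl(m)⊕0, and (ρ, η) = s − r. -/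
lemma parity_lemma (p : ℕ → Bool) :
    ∀ k, ((Finset.Ico 1 (k+1)).filter (fun j => p (j - 1) ≠ p j)).card % 2
      = if p 0 = p k then 0 else 1 := by
  intro k
  induction k with
  | zero => simp
  | succ k ih =>
    have hins : Finset.Ico 1 (k+1+1) = insert (k+1) (Finset.Ico 1 (k+1)) :=
      Nat.Ico_succ_right_eq_insert_Ico (by omega)
    rw [hins, Finset.filter_insert]
    by_cases h : p ((k+1) - 1) ≠ p (k+1)
    · rw [if_pos h, Finset.card_insert_of_notMem (by simp)]
      simp only [Nat.add_sub_cancel] at h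
      cases h0 : p 0 <;> cases hk : p k <;> cases hk1 : p (k+1) <;> simp_all <;> omega
    · rw [if_neg h]
      simp only [Nat.add_sub_cancel] at h
      cases h0 : p 0 <;> cases hk : p k <;> cases hk1 : p (k+1) <;> simp_all

/-- With the setup of the `d_k` recurrence for the augmented Dynkin–Kac diagram of a Borel of
`gl(m,n)` (primedness sequence `p`, grey node `k` iff `p (k−1) ≠ p k`, quantities
`i(k), ℓ(k), ī(k), d_k`): `d_{m+n−1} = r − s = −(ρ, η)`, where `r` is the total number of
simple roots of `0 ⊕ gl(n)` (both neighbours primed) and `s` the total number of simple roots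
of `gl(m) ⊕ 0` (both neighbours unprimed), and `(ρ, η) = s − r`. -/
theorem stmt10 {m n : ℕ} (hm : 0 < m) (hn : 0 < n) (p : ℕ → Bool)
    (hp0 : p 0 = false) (hpl : p (m + n - 1) = true)
    (hcard : ((Finset.range (m + n)).filter (fun j => p j = false)).card = m)
    (iF : ℕ → ℕ) (lF dF : ℕ → ℤ)
    (hi : ∀ k, iF k = ((Finset.Ico 1 k).filter (fun j => p (j - 1) ≠ p j)).card)
    (hl : ∀ k, lF k =
      (((Finset.Ico 1 k).filter (fun j => p (j - 1) = true ∧ p j = true)).card : ℤ) -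
        (((Finset.Ico 1 k).filter (fun j => p (j - 1) = false ∧ p j = false)).card : ℤ))
    (hd : ∀ k, dF k = lF k + (1 - (-1 : ℤ) ^ iF k) / 2) :
    dF (m + n - 1) =
      (((Finset.Ico 1 (m + n)).filter (fun j => p (j - 1) = true ∧ p j = true)).card : ℤ) -
        (((Finset.Ico 1 (m + n)).filter
            (fun j => p (j - 1) = false ∧ p j = false)).card : ℤ) := by
  obtain ⟨K, hK⟩ : ∃ K, m + n = K + 2 := ⟨m + n - 2, by omega⟩
  rw [hK] at hpl ⊢
  have hN : K + 2 - 1 = K + 1 := by omega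
  rw [hN] at hpl ⊢
  -- compute the correction term
  have hpar := parity_lemma p K
  have hiv : iF (K + 1) % 2 = if p 0 = p K then 0 else 1 := by rw [hi]; exact hpar
  have hcorr : (1 - (-1 : ℤ) ^ iF (K + 1)) / 2 = if p K = true then 1 else 0 := by
    rcases Nat.even_or_odd (iF (K + 1)) with he | ho
    · rw [he.neg_one_pow]
      have : iF (K+1) % 2 = 0 := Nat.even_iff.mp he
      rw [this] at hiv
      have : p 0 = p K := by by_contra hc; simp [hc] at hiv
      rw [hp0] at this
      simp [← this]
    · rw [ho.neg_one_pow]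
      have : iF (K+1) % 2 = 1 := Nat.odd_iff.mp ho
      rw [this] at hiv
      have : p 0 ≠ p K := by by_contra hc; simp [hc] at hiv
      rw [hp0] at this
      have : p K = true := by revert this; cases p K <;> simp
      simp [this]
  -- split the last element off the RHS sums
  have hins : Finset.Ico 1 (K+1+1) = insert (K+1) (Finset.Ico 1 (K+1)) :=
    Nat.Ico_succ_right_eq_insert_Ico (by omega)
  have hTT : ((Finset.Ico 1 (K+2)).filter (fun j => p (j - 1) = true ∧ p j = true)).card
      = ((Finset.Ico 1 (K+1)).filter (fun j => p (j - 1) = true ∧ p j = true)).card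
        + (if p K = true then 1 else 0) := by
    rw [show K+2 = K+1+1 from rfl, hins, Finset.filter_insert]
    by_cases h : p ((K+1)-1) = true ∧ p (K+1) = true
    · rw [if_pos h, Finset.card_insert_of_notMem (by simp)]
      simp only [Nat.add_sub_cancel] at h
      rw [if_pos h.1]
    · rw [if_neg h]
      simp only [Nat.add_sub_cancel] at h
      have : ¬ p K = true := fun hc => h ⟨hc, hpl⟩
      simp [this]
  have hFF : ((Finset.Ico 1 (K+2)).filter (fun j => p (j - 1) = false ∧ p j = false)).card
      = ((Finset.Ico 1 (K+1)).filter (fun j => p (j - 1) = false ∧ p j = false)).card := by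
    rw [show K+2 = K+1+1 from rfl, hins, Finset.filter_insert]
    rw [if_neg (by simp [hpl])]
  rw [hd, hl, hcorr, hTT, hFF]
  push_cast
  ring
end
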